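/- Let Λ be a rank-2 lattice with basis H, D, with H·H = 4 and discriminant r = (H·D)^2 - 4(D·D). If the equation x^2 - ry^2 = -8 has no integer solutions, then there is no C ∈ Λ with C·C = -2. Similarly, if x^2 - ry^2 = 0 has no integer solutions with (x,y) ≠ (0,0), then there is no nonzero C ∈ Λ with C·C = 0. -/
import Mathlib


/-- Rank-2 lattice with basis H, D, H·H = 4, discriminant r = (H·D)² − 4(D·D).
If x² − ry² = −8 has no integer solutions then no C ∈ Λ has C·C = −2;
if x² − ry² = 0 has no integer solutions (x,y) ≠ (0,0), no nonzero C has C·C = 0. -/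
theorem no_negative_two_or_zero_classes {M : Type*} [AddCommGroup M] [Module ℤ M]
    (B : M →ₗ[ℤ] M →ₗ[ℤ] ℤ) (hsymm : ∀ x y, B x y = B y x)
    (H D : M) (hH : B H H = 4)
    (hbasis : ∀ C : M, ∃ m n : ℤ, C = m • H + n • D)
    (hindep : ∀ m n : ℤ, m • H + n • D = 0 → m = 0 ∧ n = 0)
    (r : ℤ) (hr : r = (B H D) ^ 2 - 4 * (B D D)) :
    ((¬ ∃ x y : ℤ, x ^ 2 - r * y ^ 2 = -8) → ∀ C : M, B C C ≠ -2) ∧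
    ((¬ ∃ x y : ℤ, (x, y) ≠ (0, 0) ∧ x ^ 2 - r * y ^ 2 = 0) →
      ∀ C : M, C ≠ 0 → B C C ≠ 0) := by
  have key : ∀ (m n : ℤ), (4 * m + n * B H D) ^ 2 - r * n ^ 2 =
      4 * B (m • H + n • D) (m • H + n • D) := by
    intro m n
    have hDH : B D H = B H D := hsymm D H
    simp [hH, hDH, hr, map_add, LinearMap.add_apply]
    ring
  constructor
  · intro hpell C hC
    obtain ⟨m, n, rfl⟩ := hbasis C
    exact hpell ⟨4 * m + n * B H D, n, by rw [key m n, hC]; ring⟩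
  · intro hpell C hC0 hC
    obtain ⟨m, n, rfl⟩ := hbasis C
    refine hpell ⟨4 * m + n * B H D, n, ?_, by rw [key m n, hC]; ring⟩
    intro h
    obtain ⟨hx, hn⟩ := Prod.mk.injEq .. ▸ h
    subst hn
    simp only [mul_zero, zero_mul, add_zero] at hx
    have hm : m = 0 := by omega
    subst hm
    simp at hC0
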